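/- Let R be a binary relation on ℕ whose convolution language is regular. Then the convolution language of the transitive closure R+ of R (the smallest transitive relation containing R) is also regular. -/

import Mathlib

/-- The convolution word of the pair `(m, n)`, over the three-letter alphabet `Fin 3`
(`0` plays the role of `s`, `1` of `l`, `2` of `r`). -/
def convWord (m n : ℕ) : List (Fin 3) :=
  List.replicate (min m n) 0 ++ List.replicate (m - min m n) 1 ++
    List.replicate (n - min m n) 2

/-- The convolution language of a binary relation on `ℕ`. -/
def convLang (R : ℕ → ℕ → Prop) : Language (Fin 3) :=
  {w | ∃ m n, R m n ∧ w = convWord m n}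

/-- A binary relation on `ℕ` is regular if its convolution language is regular. -/
def RegularRel (R : ℕ → ℕ → Prop) : Prop :=
  (convLang R).IsRegular

/-!
A relation `R` on `ℕ` is regular exactly when it is periodic along the three blocks of its
convolution words: from a threshold `t` on, `R m n` does not change when `p` is added to both
coordinates, or to the gap between them. A finite automaton reads each block as an eventually
periodic counter, and conversely a counter capped modulo `p` above `t` is all an automaton needs.

For the transitive closure, split off the restriction `E` of `R` to `[C, ∞)`. It is invariant
under the shift by `p`, and its long edges can be lengthened by `p`. A path of `E` climbing by at
least `p t` either has a long edge, which can be lengthened, or climbs in short steps and passes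
two vertices that are congruent mod `p` and less than `p t + t` apart: the segment between them
can be repeated, shifted. Hence the set of vertices reachable from `w` is closed under adding
`(p t + t)!` above `w + p t`, so it is ultimately periodic. The profiles `d ↦ E⁺ b (b + d)`, all
closed under that period above `p t`, grow along `b, b + p, b + 2p, …`; so they stabilise, which
makes them periodic uniformly in `b`. Finally a path of `R` between vertices `≥ C` either stays in
`[C, ∞)` or passes through one of the finitely many vertices below `C`, whose reachability sets
are ultimately periodic.
-/

open Filter Function Relation

/-! ### Ultimately periodic predicates -/

def UltimatelyPeriodic (S : ℕ → Prop) : Prop := ∃ q > 0, ∀ᶠ x in atTop, S (x + q) ↔ S x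

section UltimatelyPeriodic

variable {S T : ℕ → Prop}

theorem eventually_forall_add_mul_iff {q : ℕ} (h : ∀ᶠ x in atTop, S (x + q) ↔ S x) :
    ∀ᶠ x in atTop, ∀ k, S (x + k * q) ↔ S x := by
  obtain ⟨θ, hθ⟩ := eventually_atTop.1 h
  refine eventually_atTop.2 ⟨θ, fun x hx k => ?_⟩
  induction k with
  | zero => simp
  | succ k ih => rw [Nat.succ_mul, ← add_assoc, hθ _ (by omega), ih]

theorem UltimatelyPeriodic.congr (hT : UltimatelyPeriodic T)
    (h : ∀ᶠ x in atTop, S x ↔ T x) : UltimatelyPeriodic S := by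
  obtain ⟨q, hq, hT⟩ := hT
  refine ⟨q, hq, ?_⟩
  filter_upwards [h, (tendsto_add_atTop_nat q).eventually h, hT] with x h₁ h₂ h₃
  rw [h₁, h₂, h₃]

theorem UltimatelyPeriodic.const_and {P : Prop} (hS : P → UltimatelyPeriodic S) :
    UltimatelyPeriodic fun x => P ∧ S x := by
  by_cases hP : P
  · exact (hS hP).congr (.of_forall fun x => and_iff_right hP)
  · exact ⟨1, one_pos, .of_forall fun x => by simp [hP]⟩

theorem UltimatelyPeriodic.or (hS : UltimatelyPeriodic S) (hT : UltimatelyPeriodic T) :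
    UltimatelyPeriodic fun x => S x ∨ T x := by
  obtain ⟨q₁, hq₁, h₁⟩ := hS
  obtain ⟨q₂, hq₂, h₂⟩ := hT
  refine ⟨q₂ * q₁, by positivity, ?_⟩
  filter_upwards [eventually_forall_add_mul_iff h₁, eventually_forall_add_mul_iff h₂]
    with x h₁ h₂
  exact or_congr (h₁ q₂) (by rw [mul_comm]; exact h₂ q₁)

theorem exists_common_period {N : ℕ} {S : ℕ → ℕ → Prop}
    (h : ∀ i < N, UltimatelyPeriodic (S i)) :
    ∃ q > 0, ∀ᶠ x in atTop, ∀ i < N, ∀ k, S i (x + k * q) ↔ S i x := by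
  choose! q hq hS using h
  refine ⟨∏ i ∈ Finset.range N, q i, Finset.prod_pos fun i hi => hq i (Finset.mem_range.1 hi), ?_⟩
  have := (eventually_all_finset (Finset.range N)).2 fun i hi =>
    eventually_forall_add_mul_iff (hS i (Finset.mem_range.1 hi))
  filter_upwards [this] with x hx i hi k
  obtain ⟨m, hm⟩ := Finset.dvd_prod_of_mem q (Finset.mem_range.2 hi)
  rw [hm, ← mul_assoc, mul_right_comm, hx i (Finset.mem_range.2 hi)]

theorem UltimatelyPeriodic.exists_lt {N : ℕ} {S : ℕ → ℕ → Prop}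
    (h : ∀ i < N, UltimatelyPeriodic (S i)) : UltimatelyPeriodic fun x => ∃ i < N, S i x := by
  obtain ⟨q, hq, h⟩ := exists_common_period h
  exact ⟨q, hq, h.mono fun x hx =>
    exists_congr fun i => and_congr_right fun hi => by simpa using hx i hi 1⟩

theorem exists_eq_of_monotone_of_add_mem {A : ℕ → Set ℕ} {c P : ℕ} (hP : 0 < P)
    (hA : Monotone A) (hadd : ∀ k d, c ≤ d → d ∈ A k → d + P ∈ A k) :
    ∃ K, ∀ k, K ≤ k → A k = A K := by
  classical
  let U := ⋃ k, A k
  let stage (d : ℕ) : ℕ := if h : ∃ k, d ∈ A k then Nat.find h else 0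
  have hstage : ∀ d ∈ U, d ∈ A (stage d) := fun d hd => by
    have h : ∃ k, d ∈ A k := Set.mem_iUnion.1 hd
    simpa only [stage, dif_pos h] using Nat.find_spec h
  -- `U` is generated, under adding `P` above `c`, by its elements below `c` and the least
  -- element above `c` of each residue class mod `P`; `A K` contains all of these.
  let least (j : ℕ) : ℕ := sInf {d | c ≤ d ∧ d % P = j ∧ d ∈ U}
  let K := max ((Finset.range c).sup stage) ((Finset.range P).sup (stage ∘ least))
  have hU : U ⊆ A K := by
    intro d hd
    by_cases hdc : d < c
    · exact hA (le_max_of_le_left (Finset.le_sup (Finset.mem_range.2 hdc))) (hstage d hd)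
    have hd' : d ∈ {e | c ≤ e ∧ e % P = d % P ∧ e ∈ U} := ⟨not_lt.1 hdc, rfl, hd⟩
    obtain ⟨hc, hmod, hmem⟩ : least (d % P) ∈ {e | c ≤ e ∧ e % P = d % P ∧ e ∈ U} :=
      Nat.sInf_mem ⟨d, hd'⟩
    have hle : least (d % P) ≤ d := Nat.sInf_le hd'
    have hK : least (d % P) ∈ A K := hA (le_max_of_le_right (Finset.le_sup (f := stage ∘ least)
      (Finset.mem_range.2 (Nat.mod_lt d hP)))) (hstage _ hmem)
    obtain ⟨i, hi⟩ := (Nat.modEq_iff_dvd' hle).1 hmod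
    have hiter : ∀ i, least (d % P) + i * P ∈ A K := fun i => by
      induction i with
      | zero => simpa using hK
      | succ i ih => rw [Nat.succ_mul, ← add_assoc]; exact hadd K _ (by omega) ih
    rw [show d = least (d % P) + i * P by rw [mul_comm, ← hi]; omega]
    exact hiter i
  exact ⟨K, fun k hk => (hA hk).antisymm' fun d hd => hU (Set.mem_iUnion.2 ⟨k, hd⟩)⟩

theorem UltimatelyPeriodic.of_add_mem {q c : ℕ} (hq : 0 < q)
    (h : ∀ x, c ≤ x → S x → S (x + q)) : UltimatelyPeriodic S := by
  obtain ⟨K, hK⟩ := exists_eq_of_monotone_of_add_mem (A := fun k => {x | S (c + x + k * q)})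
    (c := 0) hq
    (monotone_nat_of_le_succ fun k x hx => by
      simpa only [Set.mem_ofPred_eq, Nat.succ_mul, ← add_assoc] using h _ (by omega) hx)
    (fun k x _ hx => by
      simpa only [Set.mem_ofPred_eq, add_right_comm _ q, ← add_assoc] using h _ (by omega) hx)
  refine ⟨q, hq, eventually_atTop.2 ⟨c + K * q, fun y hy => ?_⟩⟩
  obtain ⟨x, rfl⟩ : ∃ x, y = c + x + K * q := ⟨y - c - K * q, by omega⟩
  have := Set.ext_iff.1 (hK (K + 1) K.le_succ) x
  rwa [Set.mem_ofPred_eq, Set.mem_ofPred_eq, Nat.succ_mul, ← add_assoc] at this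

end UltimatelyPeriodic

/-! ### Periodicity of relations along convolution words -/

def ShiftPeriodic (R : ℕ → ℕ → Prop) (t q : ℕ) : Prop :=
  ∀ m n, t ≤ m → t ≤ n → (R (m + q) (n + q) ↔ R m n)

def GapPeriodic (R : ℕ → ℕ → Prop) (t q : ℕ) : Prop :=
  ∀ m d, t ≤ d → (R m (m + d + q) ↔ R m (m + d))

section Periodic

variable {R : ℕ → ℕ → Prop} {t t' q : ℕ}

theorem ShiftPeriodic.mono (h : ShiftPeriodic R t q) (htt' : t ≤ t') : ShiftPeriodic R t' q :=
  fun m n hm hn => h m n (htt'.trans hm) (htt'.trans hn)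

theorem ShiftPeriodic.mul (h : ShiftPeriodic R t q) (k : ℕ) : ShiftPeriodic R t (k * q) := by
  intro m n hm hn
  induction k with
  | zero => simp
  | succ k ih =>
    rw [← ih, Nat.succ_mul, ← add_assoc, ← add_assoc]
    exact h _ _ (by omega) (by omega)

theorem GapPeriodic.mono (h : GapPeriodic R t q) (htt' : t ≤ t') : GapPeriodic R t' q :=
  fun m d hd => h m d (htt'.trans hd)

theorem GapPeriodic.mul (h : GapPeriodic R t q) (k : ℕ) : GapPeriodic R t (k * q) := by
  intro m d hd
  induction k with
  | zero => simp
  | succ k ih =>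
    rw [← ih, Nat.succ_mul]
    simpa only [add_assoc] using h m (d + k * q) (by omega)

end Periodic

structure ConvPeriodic (R : ℕ → ℕ → Prop) (t p : ℕ) : Prop where
  pos : 0 < p
  shift : ShiftPeriodic R t p
  gap : GapPeriodic R t p
  gap_swap : GapPeriodic (swap R) t p

namespace ConvPeriodic

variable {R : ℕ → ℕ → Prop} {t t' p : ℕ}

protected theorem swap (h : ConvPeriodic R t p) : ConvPeriodic (swap R) t p :=
  ⟨h.pos, fun m n hm hn => h.shift n m hn hm, h.gap_swap, h.gap⟩

theorem mono (h : ConvPeriodic R t p) (htt' : t ≤ t') : ConvPeriodic R t' p :=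
  ⟨h.pos, h.shift.mono htt', h.gap.mono htt', h.gap_swap.mono htt'⟩

end ConvPeriodic

/-! ### Regular relations are periodic along convolution words -/

theorem Function.exists_iterate_add_eq {ι σ : Type*} [Finite ι] [Finite σ] (f : ι → σ → σ) :
    ∃ t p, 0 < p ∧ ∀ i k, t ≤ k → (f i)^[k + p] = (f i)^[k] := by
  obtain ⟨x, y, hxy, hfxy⟩ := Finite.exists_ne_map_eq_of_infinite fun k : ℕ => fun i => (f i)^[k]
  wlog hlt : x < y generalizing x y
  · exact this y x hxy.symm hfxy.symm (by omega)
  refine ⟨x, y - x, by omega, fun i k hk => ?_⟩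
  calc (f i)^[k + (y - x)] = (f i)^[k - x] ∘ (f i)^[y] := by rw [← iterate_add]; congr 1; omega
    _ = (f i)^[k - x] ∘ (f i)^[x] := by rw [congrFun hfxy i]
    _ = (f i)^[k] := by rw [← iterate_add]; congr 1; omega

theorem DFA.evalFrom_replicate {α σ : Type*} (M : DFA α σ) (s : σ) (a : α) (k : ℕ) :
    M.evalFrom s (List.replicate k a) = (M.step · a)^[k] s := by
  induction k generalizing s with
  | zero => rfl
  | succ k ih => exact ih _

theorem convWord_add_add {a b c : ℕ} (h : b = 0 ∨ c = 0) :
    convWord (a + b) (a + c) = List.replicate a 0 ++ List.replicate b 1 ++ List.replicate c 2 := by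
  have : min (a + b) (a + c) = a := by omega
  simp [convWord, this]

theorem exists_eq_add_add (m n : ℕ) : ∃ a b c, (b = 0 ∨ c = 0) ∧ m = a + b ∧ n = a + c :=
  ⟨min m n, m - min m n, n - min m n, by omega, by omega, by omega⟩

theorem convWord_injective {m n m' n' : ℕ} (h : convWord m n = convWord m' n') :
    m = m' ∧ n = n' := by
  have hc := fun i : Fin 3 => congrArg (List.count i) h
  have h0 := hc 0
  have h1 := hc 1
  have h2 := hc 2
  simp [convWord, List.count_replicate] at h0 h1 h2
  omega

theorem mem_convLang {R : ℕ → ℕ → Prop} {m n : ℕ} : convWord m n ∈ convLang R ↔ R m n :=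
  ⟨fun ⟨_, _, hR, hw⟩ => (convWord_injective hw).1 ▸ (convWord_injective hw).2 ▸ hR,
    fun hR => ⟨m, n, hR, rfl⟩⟩

theorem convPeriodic_of_isRegular {R : ℕ → ℕ → Prop} (hR : (convLang R).IsRegular) :
    ∃ t p, ConvPeriodic R t p := by
  obtain ⟨σ, _, M, hM⟩ := hR
  obtain ⟨t, p, hp, hper⟩ := exists_iterate_add_eq fun (i : Fin 3) s => M.step s i
  have key : ∀ a b c, b = 0 ∨ c = 0 → (R (a + b) (a + c) ↔
      (M.step · 2)^[c] ((M.step · 1)^[b] ((M.step · 0)^[a] M.start)) ∈ M.accept) := by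
    intro a b c hbc
    rw [← mem_convLang (R := R), ← hM, DFA.mem_accepts, convWord_add_add hbc, DFA.eval,
      DFA.evalFrom_of_append, DFA.evalFrom_of_append, DFA.evalFrom_replicate,
      DFA.evalFrom_replicate, DFA.evalFrom_replicate]
  refine ⟨t, p, ⟨hp, fun m n hm hn => ?_, fun m d hd => ?_, fun m d hd => ?_⟩⟩
  · obtain ⟨a, b, c, hbc, rfl, rfl⟩ := exists_eq_add_add m n
    rw [add_right_comm, add_right_comm a c, key _ _ _ hbc, key _ _ _ hbc, hper 0 a (by omega)]
  · have h₁ := key m 0 (d + p) (.inl rfl)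
    have h₂ := key m 0 d (.inl rfl)
    simp only [add_zero, ← add_assoc] at h₁ h₂
    rw [h₁, h₂, hper 2 d hd]
  · have h₁ := key m (d + p) 0 (.inr rfl)
    have h₂ := key m d 0 (.inr rfl)
    simp only [add_zero, ← add_assoc] at h₁ h₂
    rw [swap, swap, h₁, h₂, hper 1 d hd]

/-! ### Periodic relations are regular -/

theorem DFA.isRegular_accepts_of_map {α σ τ : Type*} [Finite τ] (M : DFA α σ) (f : σ → τ)
    (hstep : ∀ s s' a, f s = f s' → f (M.step s a) = f (M.step s' a))
    (haccept : ∀ s s', f s = f s' → s ∈ M.accept → s' ∈ M.accept) : M.accepts.IsRegular := by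
  have hfrom : M.acceptsFrom.FactorsThrough f := by
    intro s s' h
    ext x
    induction x generalizing s s' with
    | nil => exact ⟨haccept s s' h, haccept s' s h.symm⟩
    | cons a x ih => exact ih (hstep s s' a h)
  rw [Language.isRegular_iff_finite_range_leftQuotient, Language.leftQuotient_accepts]
  refine (Set.finite_range (extend f M.acceptsFrom ⊥)).subset ?_
  rintro _ ⟨w, rfl⟩
  exact ⟨f (M.eval w), hfrom.extend_apply _ _⟩

def capMod (t p x : ℕ) : ℕ := if x < t then x else t + (x - t) % p

section capMod

variable {t p x y : ℕ}

theorem capMod_lt (hp : 0 < p) : capMod t p x < t + p := by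
  unfold capMod
  split_ifs
  · omega
  · have := Nat.mod_lt (x - t) hp; omega

theorem capMod_eq_zero (ht : 0 < t) : capMod t p x = 0 ↔ x = 0 := by
  unfold capMod; split_ifs <;> omega

theorem capMod_eq_iff :
    capMod t p x = capMod t p y ↔ x = y ∨ t ≤ x ∧ t ≤ y ∧ x ≡ y [MOD p] := by
  unfold capMod
  split_ifs with hx hy hy
  · omega
  · omega
  · omega
  · rw [add_right_inj]
    have hx' : x - t + t = x := Nat.sub_add_cancel (not_lt.1 hx)
    have hy' : y - t + t = y := Nat.sub_add_cancel (not_lt.1 hy)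
    constructor
    · intro h
      have h' : x - t + t ≡ y - t + t [MOD p] := Nat.ModEq.add_right t h
      exact .inr ⟨not_lt.1 hx, not_lt.1 hy, by rwa [hx', hy'] at h'⟩
    · rintro (rfl | ⟨-, -, h⟩)
      · rfl
      · exact Nat.ModEq.add_right_cancel' t (by rwa [hx', hy'])

theorem capMod_succ (h : capMod t p x = capMod t p y) :
    capMod t p (x + 1) = capMod t p (y + 1) := by
  rcases capMod_eq_iff.1 h with rfl | ⟨hx, hy, hxy⟩
  · rfl
  · exact capMod_eq_iff.2 (.inr ⟨by omega, by omega, hxy.add_right 1⟩)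

theorem iff_of_capMod_eq {P : ℕ → Prop} (hP : ∀ x, t ≤ x → ∀ k, P (x + k * p) ↔ P x)
    (h : capMod t p x = capMod t p y) : P x ↔ P y := by
  rcases capMod_eq_iff.1 h with rfl | ⟨hx, hy, hxy⟩
  · rfl
  wlog hle : x ≤ y generalizing x y
  · exact (this h.symm hy hx hxy.symm (by omega)).symm
  obtain ⟨k, hk⟩ := (Nat.modEq_iff_dvd' hle).1 hxy
  rw [show y = x + k * p by rw [mul_comm, ← hk]; omega, hP x hx]

end capMod

theorem ConvPeriodic.iff_of_capMod_eq {R : ℕ → ℕ → Prop} {t p a a' d d' : ℕ}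
    (h : ConvPeriodic R t p) (ha : capMod t p a = capMod t p a')
    (hd : capMod t p d = capMod t p d') : R a (a + d) ↔ R a' (a' + d') :=
  calc R a (a + d) ↔ R a (a + d') :=
        _root_.iff_of_capMod_eq (P := fun d => R a (a + d))
          (fun d hd k => by simpa only [add_assoc] using h.gap.mul k a d hd) hd
    _ ↔ R a' (a' + d') :=
        _root_.iff_of_capMod_eq (P := fun a => R a (a + d'))
          (fun a ha k => by rw [← h.shift.mul k a (a + d') ha (by omega), add_right_comm]) ha

/-- The condition `b = 0 ∨ c = 0` in `accept` holds in every reachable state; it is repeated there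
so that acceptance depends only on the counters up to `capMod`. -/
def convDFA (R : ℕ → ℕ → Prop) : DFA (Fin 3) (Option (ℕ × ℕ × ℕ)) where
  step
    | some (a, b, c), 0 => if b = 0 ∧ c = 0 then some (a + 1, b, c) else none
    | some (a, b, c), 1 => if c = 0 then some (a, b + 1, c) else none
    | some (a, b, c), 2 => if b = 0 then some (a, b, c + 1) else none
    | none, _ => none
  start := some (0, 0, 0)
  accept := {s | ∃ a b c, s = some (a, b, c) ∧ (b = 0 ∨ c = 0) ∧ R (a + b) (a + c)}

section convDFA

variable {R : ℕ → ℕ → Prop}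

theorem convDFA_eval_replicate {a b c : ℕ} (h : b = 0 ∨ c = 0) :
    (convDFA R).eval (List.replicate a 0 ++ List.replicate b 1 ++ List.replicate c 2) =
      some (a, b, c) := by
  have h₀ : ∀ k, (convDFA R).evalFrom (convDFA R).start (List.replicate k 0) = some (k, 0, 0) := by
    intro k
    induction k with
    | zero => rfl
    | succ k ih => rw [List.replicate_succ', DFA.evalFrom_append_singleton, ih]; simp [convDFA]
  have h₁ : ∀ k, (convDFA R).evalFrom (some (a, 0, 0)) (List.replicate k 1) = some (a, k, 0) := by
    intro k
    induction k with
    | zero => rfl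
    | succ k ih => rw [List.replicate_succ', DFA.evalFrom_append_singleton, ih]; simp [convDFA]
  have h₂ : ∀ k, (convDFA R).evalFrom (some (a, 0, 0)) (List.replicate k 2) = some (a, 0, k) := by
    intro k
    induction k with
    | zero => rfl
    | succ k ih => rw [List.replicate_succ', DFA.evalFrom_append_singleton, ih]; simp [convDFA]
  rw [DFA.eval, DFA.evalFrom_of_append, DFA.evalFrom_of_append, h₀]
  rcases h with rfl | rfl
  · rw [List.replicate_zero, DFA.evalFrom_nil, h₂]
  · rw [h₁, List.replicate_zero, DFA.evalFrom_nil]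

theorem eq_replicate_of_convDFA_eval {w : List (Fin 3)} {a b c : ℕ}
    (h : (convDFA R).eval w = some (a, b, c)) :
    w = List.replicate a 0 ++ List.replicate b 1 ++ List.replicate c 2 := by
  induction w using List.reverseRecOn generalizing a b c with
  | nil =>
    simp only [DFA.eval, DFA.evalFrom_nil, convDFA, Option.some.injEq, Prod.mk.injEq] at h
    obtain ⟨rfl, rfl, rfl⟩ := h
    rfl
  | append_singleton w x ih =>
    rw [DFA.eval_append_singleton] at h
    rcases hw : (convDFA R).eval w with _ | ⟨a', b', c'⟩
    · rw [hw] at h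
      simp [convDFA] at h
    · rw [ih hw]
      rw [hw] at h
      fin_cases x <;> simp [convDFA] at h
      · obtain ⟨⟨rfl, rfl⟩, rfl, rfl, rfl⟩ := h
        simp [List.replicate_succ']
      all_goals
        obtain ⟨rfl, rfl, rfl, rfl⟩ := h
        simp [List.replicate_succ']

theorem accepts_convDFA : (convDFA R).accepts = convLang R := by
  ext w
  constructor
  · rintro ⟨a, b, c, hw, hbc, hR⟩
    rw [eq_replicate_of_convDFA_eval hw]
    exact ⟨_, _, hR, (convWord_add_add hbc).symm⟩
  · rintro ⟨m, n, hR, rfl⟩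
    obtain ⟨a, b, c, hbc, rfl, rfl⟩ := exists_eq_add_add m n
    exact ⟨a, b, c, by rw [convWord_add_add hbc]; exact convDFA_eval_replicate hbc, hbc, hR⟩

end convDFA

theorem ConvPeriodic.isRegular {R : ℕ → ℕ → Prop} {t p : ℕ} (h : ConvPeriodic R t p) :
    (convLang R).IsRegular := by
  -- threshold `t + 1`, so that a counter is `0` exactly when its cap is
  have h' := h.mono t.le_succ
  let cap (x : ℕ) : Fin (t + 1 + p) := ⟨capMod (t + 1) p x, capMod_lt h.pos⟩
  have hcap : ∀ {x y}, cap x = cap y → capMod (t + 1) p x = capMod (t + 1) p y := Fin.ext_iff.1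
  have hzero : ∀ {x y}, cap x = cap y → (x = 0 ↔ y = 0) := fun hxy => by
    rw [← capMod_eq_zero t.succ_pos, hcap hxy, capMod_eq_zero t.succ_pos]
  have hsucc : ∀ {x y}, cap x = cap y → cap (x + 1) = cap (y + 1) :=
    fun hxy => Fin.ext (capMod_succ (hcap hxy))
  rw [← accepts_convDFA]
  refine (convDFA R).isRegular_accepts_of_map (Option.map (Prod.map cap (Prod.map cap cap))) ?_ ?_
  · rintro (_ | ⟨a, b, c⟩) (_ | ⟨a', b', c'⟩) x hs <;> simp at hs
    · rfl
    · obtain ⟨ha, hb, hc⟩ := hs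
      fin_cases x <;> simp only [convDFA, hzero hb, hzero hc] <;> split_ifs <;>
        simp [ha, hb, hc, hsucc ha, hsucc hb, hsucc hc]
  · rintro (_ | ⟨a, b, c⟩) (_ | ⟨a', b', c'⟩) hs ⟨a₀, b₀, c₀, he, hbc, hR⟩ <;> simp at hs he
    obtain ⟨ha, hb, hc⟩ := hs
    obtain ⟨rfl, rfl, rfl⟩ := he
    refine ⟨a', b', c', rfl, by rwa [← hzero hb, ← hzero hc], ?_⟩
    rcases hbc with rfl | rfl
    · rw [(hzero hb).1 rfl, add_zero] at *
      exact (h'.iff_of_capMod_eq (hcap ha) (hcap hc)).1 hR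
    · rw [(hzero hc).1 rfl, add_zero] at *
      exact (h'.swap.iff_of_capMod_eq (hcap ha) (hcap hb)).1 hR

/-! ### Pumping paths of shift-invariant relations -/

section ShortSteps

variable {E : ℕ → ℕ → Prop} {t p w n : ℕ}

theorem Relation.ReflTransGen.exists_long_step_or_short (h : ReflTransGen E w n) :
    (∃ a b, ReflTransGen E w a ∧ E a b ∧ a + t ≤ b ∧ ReflTransGen E b n) ∨
      ReflTransGen (fun x y => E x y ∧ y < x + t) w n := by
  induction h using ReflTransGen.head_induction_on with
  | refl => exact .inr .refl
  | @head a b hab hbn ih =>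
    rcases ih with ⟨c, d, hbc, hcd, hlong, hdn⟩ | hshort
    · exact .inl ⟨c, d, .head hab hbc, hcd, hlong, hdn⟩
    · by_cases hab' : a + t ≤ b
      · exact .inl ⟨a, b, .refl, hab, hab', ReflTransGen.mono (fun _ _ h => h.1) _ _ hshort⟩
      · exact .inr (.head ⟨hab, by omega⟩ hshort)

theorem Relation.ReflTransGen.exists_mem_Ico (hE : ∀ x y, E x y → y < x + t) (ht : 0 < t)
    (h : ReflTransGen E w n) {c : ℕ} (hwc : w ≤ c) (hcn : c ≤ n) :
    ∃ z, c ≤ z ∧ z < c + t ∧ ReflTransGen E w z ∧ ReflTransGen E z n := by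
  induction h using ReflTransGen.head_induction_on with
  | refl =>
    obtain rfl : c = n := le_antisymm hcn hwc
    exact ⟨c, le_rfl, by omega, .refl, .refl⟩
  | @head a b hab hbn ih =>
    by_cases hac : a = c
    · exact ⟨a, hac.ge, by omega, .refl, .head hab hbn⟩
    by_cases hcb : c ≤ b
    · exact ⟨b, hcb, by have := hE a b hab; omega, .single hab, hbn⟩
    · obtain ⟨z, hcz, hzc, hbz, hzn⟩ := ih (by omega)
      exact ⟨z, hcz, hzc, .head hab hbz, hzn⟩

theorem Relation.ReflTransGen.exists_seq_mem_Ico (hE : ∀ x y, E x y → y < x + t) (ht : 0 < t)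
    (h : ReflTransGen E w n) (N : ℕ) (hN : w + N * t ≤ n) :
    ∃ g : ℕ → ℕ, g 0 = w ∧
      (∀ i ≤ N, w + i * t ≤ g i ∧ g i < w + i * t + t ∧ ReflTransGen E (g i) n) ∧
      ∀ i < N, ReflTransGen E (g i) (g (i + 1)) := by
  induction N with
  | zero => exact ⟨fun _ => w, rfl, fun i hi => by simp [show i = 0 by omega, ht, h], by simp⟩
  | succ N ih =>
    obtain ⟨g, hg0, hwin, hlink⟩ := ih (by rw [Nat.succ_mul] at hN; omega)
    obtain ⟨hlo, hhi, hgn⟩ := hwin N le_rfl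
    obtain ⟨z, hcz, hzc, hgz, hzn⟩ :=
      hgn.exists_mem_Ico hE ht (c := w + (N + 1) * t) (by rw [Nat.succ_mul]; omega) hN
    refine ⟨update g (N + 1) z, by simp [hg0], fun i hi => ?_, fun i hi => ?_⟩
    · rcases (show i ≤ N ∨ i = N + 1 by omega) with hi | rfl
      · rw [update_of_ne (by omega)]; exact hwin i hi
      · rw [update_self]; exact ⟨hcz, hzc, hzn⟩
    · rw [update_of_ne (by omega : i ≠ N + 1)]
      rcases (show i < N ∨ i = N by omega) with hi | rfl
      · rw [update_of_ne (by omega)]; exact hlink i hi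
      · rw [update_self]; exact hgz

theorem Relation.ReflTransGen.exists_loop (hE : ∀ x y, E x y → y < x + t) (ht : 0 < t)
    (hp : 0 < p) (h : ReflTransGen E w n) (hn : w + p * t ≤ n) :
    ∃ x d, 0 < d ∧ d ≤ p * t + t ∧ p ∣ d ∧
      ReflTransGen E w x ∧ ReflTransGen E x (x + d) ∧ ReflTransGen E (x + d) n := by
  obtain ⟨g, hg0, hwin, hlink⟩ := h.exists_seq_mem_Ico hE ht p hn
  have hchain : ∀ i j, i ≤ j → j ≤ p → ReflTransGen E (g i) (g j) := fun i j hij hj =>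
    (reflTransGen_of_succ_of_le (fun i j => ReflTransGen E (g i) (g j))
      (fun k hk => hlink k (by simp at hk; omega)) hij).lift' g fun _ _ h => h
  -- two of the `p + 1` points `g 0, …, g p` are congruent mod `p`
  obtain ⟨i, hi, j, hj, hij, hmod⟩ := Finset.exists_ne_map_eq_of_card_lt_of_maps_to
    (s := Finset.range (p + 1)) (t := Finset.range p) (f := fun i => g i % p) (by simp)
    (fun i _ => Finset.mem_range.2 (Nat.mod_lt _ hp))
  simp only [Finset.mem_range] at hi hj
  obtain ⟨i, j, hlt, hj, hmod⟩ : ∃ i j, i < j ∧ j ≤ p ∧ g i % p = g j % p := by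
    rcases lt_or_gt_of_ne hij with h | h
    exacts [⟨i, j, h, by omega, hmod⟩, ⟨j, i, h, by omega, hmod.symm⟩]
  obtain ⟨hi₁, hi₂, -⟩ := hwin i (by omega)
  obtain ⟨hj₁, hj₂, hjn⟩ := hwin j (by omega)
  have hij_t : (i + 1) * t ≤ j * t := Nat.mul_le_mul_right t hlt
  have hjp_t : j * t ≤ p * t := Nat.mul_le_mul_right t (by omega)
  have hgij : g i ≤ g j := by rw [Nat.succ_mul] at hij_t; omega
  refine ⟨g i, g j - g i, by rw [Nat.succ_mul] at hij_t; omega, by omega,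
    (Nat.modEq_iff_dvd' hgij).1 hmod, hg0 ▸ hchain 0 i (by omega) (by omega), ?_, ?_⟩ <;>
    rw [Nat.add_sub_cancel' hgij]
  exacts [hchain i j hlt.le (by omega), hjn]

end ShortSteps

structure Pumpable (E : ℕ → ℕ → Prop) (t p : ℕ) : Prop where
  shift : ∀ a b, E a b → E (a + p) (b + p)
  pump : ∀ a d, t ≤ d → E a (a + d) → E a (a + d + p)

namespace Pumpable

variable {E : ℕ → ℕ → Prop} {t p w n : ℕ}

theorem shift_of_dvd (h : Pumpable E t p) {q : ℕ} (hq : p ∣ q) {a b : ℕ} (hab : E a b) :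
    E (a + q) (b + q) := by
  obtain ⟨k, rfl⟩ := hq
  induction k with
  | zero => simpa
  | succ k ih => rw [Nat.mul_succ, ← add_assoc, ← add_assoc]; exact h.shift _ _ ih

theorem reflTransGen_shift (h : Pumpable E t p) {q : ℕ} (hq : p ∣ q) {a b : ℕ}
    (hab : ReflTransGen E a b) : ReflTransGen E (a + q) (b + q) :=
  ReflTransGen.lift (· + q) (fun _ _ => h.shift_of_dvd hq) _ _ hab

theorem transGen_shift (h : Pumpable E t p) {q : ℕ} (hq : p ∣ q) {a b : ℕ}
    (hab : TransGen E a b) : TransGen E (a + q) (b + q) :=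
  TransGen.lift (· + q) (fun _ _ => h.shift_of_dvd hq) _ _ hab

theorem pump_mul (h : Pumpable E t p) (k : ℕ) {a d : ℕ} (hd : t ≤ d) (had : E a (a + d)) :
    E a (a + d + k * p) := by
  induction k with
  | zero => simpa
  | succ k ih =>
    rw [Nat.succ_mul, ← add_assoc]
    simpa only [add_assoc] using
      h.pump a (d + k * p) (by omega) (by simpa only [add_assoc] using ih)

theorem reflTransGen_add_mul_of_long_step (h : Pumpable E t p) {a b : ℕ}
    (hwa : ReflTransGen E w a) (hab : E a b) (hlong : a + t ≤ b) (hbn : ReflTransGen E b n)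
    (k : ℕ) : ReflTransGen E w (n + k * p) := by
  obtain ⟨d, rfl⟩ : ∃ d, b = a + d := ⟨b - a, by omega⟩
  exact hwa.trans
    (.head (h.pump_mul k (by omega) hab) (h.reflTransGen_shift (dvd_mul_left p k) hbn))

theorem reflTransGen_add_mul_of_loop (h : Pumpable E t p) {x d : ℕ} (hd : p ∣ d)
    (hwx : ReflTransGen E w x) (hloop : ReflTransGen E x (x + d)) (hn : ReflTransGen E (x + d) n)
    (k : ℕ) : ReflTransGen E w (n + k * d) := by
  have hloops : ∀ i, ReflTransGen E x (x + i * d) := fun i => by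
    induction i with
    | zero => simpa using .refl
    | succ i ih =>
      refine ih.trans ?_
      simpa only [Nat.succ_mul, add_right_comm, ← add_assoc] using
        h.reflTransGen_shift (hd.mul_left i) hloop
  refine hwx.trans ((hloops (k + 1)).trans ?_)
  simpa only [Nat.succ_mul, add_right_comm, ← add_assoc] using
    h.reflTransGen_shift (hd.mul_left k) hn

theorem reflTransGen_add_factorial (h : Pumpable E t p) (hp : 0 < p) (ht : 0 < t)
    (hwn : ReflTransGen E w n) (hn : w + p * t ≤ n) :
    ReflTransGen E w (n + (p * t + t).factorial) := by
  rcases hwn.exists_long_step_or_short (t := t) with ⟨a, b, hwa, hab, hlong, hbn⟩ | hshort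
  · obtain ⟨k, hk⟩ : p ∣ (p * t + t).factorial := Nat.dvd_factorial hp (by nlinarith)
    rw [hk, mul_comm]
    exact h.reflTransGen_add_mul_of_long_step hwa hab hlong hbn k
  · obtain ⟨x, d, hd, hdle, hpd, hwx, hloop, hdn⟩ :=
      hshort.exists_loop (fun _ _ h => h.2) ht hp hn
    have hsub : ∀ {a b}, ReflTransGen (fun x y => E x y ∧ y < x + t) a b → ReflTransGen E a b :=
      ReflTransGen.mono (fun _ _ h => h.1) _ _
    obtain ⟨k, hk⟩ : d ∣ (p * t + t).factorial := Nat.dvd_factorial hd hdle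
    rw [hk, mul_comm]
    exact h.reflTransGen_add_mul_of_loop hpd (hsub hwx) (hsub hloop) (hsub hdn) k

theorem transGen_add_factorial (h : Pumpable E t p) (hp : 0 < p) (ht : 0 < t)
    (hwn : TransGen E w n) (hn : w + p * t ≤ n) : TransGen E w (n + (p * t + t).factorial) :=
  (reflTransGen_iff_eq_or_transGen.1 (h.reflTransGen_add_factorial hp ht hwn.to_reflTransGen hn)
    ).resolve_left (by have := (p * t + t).factorial_pos; omega)

theorem ultimatelyPeriodic_reflTransGen (h : Pumpable E t p) (hp : 0 < p) (ht : 0 < t)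
    (w : ℕ) : UltimatelyPeriodic (ReflTransGen E w) :=
  .of_add_mem (Nat.factorial_pos _) fun _ hn hwn => h.reflTransGen_add_factorial hp ht hwn hn

theorem ultimatelyPeriodic_transGen_add (h : Pumpable E t p) (hp : 0 < p) (ht : 0 < t)
    (b : ℕ) : UltimatelyPeriodic fun d => TransGen E b (b + d) :=
  .of_add_mem (c := p * t) (Nat.factorial_pos _) fun d hd hbd => by
    simpa only [add_assoc] using h.transGen_add_factorial hp ht hbd (by omega)

theorem exists_transGen_stable (h : Pumpable E t p) (hp : 0 < p) (ht : 0 < t) :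
    ∃ V, ∀ b, V ≤ b → ∀ k d,
      TransGen E (b + k * p) (b + k * p + d) ↔ TransGen E b (b + d) := by
  have hchain : ∀ r, ∃ K, ∀ k, K ≤ k → {d | TransGen E (r + k * p) (r + k * p + d)} =
      {d | TransGen E (r + K * p) (r + K * p + d)} := fun r =>
    exists_eq_of_monotone_of_add_mem (c := p * t) (Nat.factorial_pos (p * t + t))
      (monotone_nat_of_le_succ fun k d hd => by
        simpa only [Set.mem_ofPred_eq, Nat.succ_mul, ← add_assoc, add_right_comm _ p] using
          h.transGen_shift dvd_rfl hd)
      (fun k d hd hmem => by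
        simpa only [Set.mem_ofPred_eq, ← add_assoc] using
          h.transGen_add_factorial hp ht hmem (by omega))
  choose K hK using hchain
  refine ⟨(Finset.range p).sup fun r => r + K r * p, fun b hb k d => ?_⟩
  have hr : b % p < p := Nat.mod_lt b hp
  have hdiv := Nat.mod_add_div' b p
  have hKb : K (b % p) ≤ b / p := by
    have := (Finset.le_sup (f := fun r => r + K r * p) (Finset.mem_range.2 hr)).trans hb
    exact Nat.le_of_mul_le_mul_right (by omega) hp
  have hstage : ∀ j, TransGen E (b + j * p) (b + j * p + d) ↔
      TransGen E (b % p + K (b % p) * p) (b % p + K (b % p) * p + d) := fun j => by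
    have := Set.ext_iff.1 (hK (b % p) (b / p + j) (by omega)) d
    rwa [Set.mem_ofPred_eq, Set.mem_ofPred_eq, add_mul, ← add_assoc, hdiv] at this
  simpa using (hstage k).trans (hstage 0).symm

theorem exists_transGen_gap_period (h : Pumpable E t p) (hp : 0 < p) (ht : 0 < t) :
    ∃ q > 0, ∀ᶠ d in atTop, ∀ b k, TransGen E b (b + d + k * q) ↔ TransGen E b (b + d) := by
  obtain ⟨V, hV⟩ := h.exists_transGen_stable hp ht
  have hrep : ∀ b, ∃ ρ < V + p, ∀ d, TransGen E b (b + d) ↔ TransGen E ρ (ρ + d) := by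
    intro b
    by_cases hb : b < V + p
    · exact ⟨b, hb, fun d => Iff.rfl⟩
    obtain ⟨ρ, k, hVρ, hρ, rfl⟩ : ∃ ρ k, V ≤ ρ ∧ ρ < V + p ∧ b = ρ + k * p :=
      ⟨V + (b - V) % p, (b - V) / p, by omega, by have := Nat.mod_lt (b - V) hp; omega,
        by have := Nat.mod_add_div' (b - V) p; omega⟩
    exact ⟨ρ, hρ, hV ρ hVρ k⟩
  obtain ⟨q, hq, hper⟩ := exists_common_period (N := V + p)
    (S := fun ρ d => TransGen E ρ (ρ + d)) fun ρ _ => h.ultimatelyPeriodic_transGen_add hp ht ρ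
  refine ⟨q, hq, hper.mono fun d hd b k => ?_⟩
  obtain ⟨ρ, hρ, hbρ⟩ := hrep b
  rw [add_assoc, hbρ, hbρ]
  exact hd ρ hρ k

end Pumpable

/-! ### Transitive closure -/

def restrictIci (R : ℕ → ℕ → Prop) (C a b : ℕ) : Prop := C ≤ a ∧ C ≤ b ∧ R a b

section restrictIci

variable {R : ℕ → ℕ → Prop} {C : ℕ}

theorem restrictIci_swap : restrictIci (swap R) C = swap (restrictIci R C) := by
  funext a b
  exact propext ⟨fun ⟨ha, hb, h⟩ => ⟨hb, ha, h⟩, fun ⟨hb, ha, h⟩ => ⟨ha, hb, h⟩⟩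

theorem Relation.TransGen.restrictIci_or_exists {a b : ℕ} (h : TransGen R a b) (hb : C ≤ b) :
    (C ≤ a ∧ TransGen (restrictIci R C) a b) ∨
      ∃ u < C, ReflTransGen R a u ∧ ∃ w, C ≤ w ∧ R u w ∧ ReflTransGen (restrictIci R C) w b := by
  induction h using TransGen.head_induction_on with
  | @single a hab =>
    by_cases ha : C ≤ a
    · exact .inl ⟨ha, .single ⟨ha, hb, hab⟩⟩
    · exact .inr ⟨a, by omega, .refl, b, hb, hab, .refl⟩
  | @head a c hac hcb ih =>
    rcases ih with ⟨hc, hcb'⟩ | ⟨u, hu, hcu, w, hw, huw, hwb⟩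
    · by_cases ha : C ≤ a
      · exact .inl ⟨ha, .head ⟨ha, hc, hac⟩ hcb'⟩
      · exact .inr ⟨a, by omega, .refl, c, hc, hac, hcb'.to_reflTransGen⟩
    · exact .inr ⟨u, hu, .head hac hcu, w, hw, huw, hwb⟩

theorem transGen_iff_restrictIci_or_exists {m n : ℕ} (hm : C ≤ m) (hn : C ≤ n) :
    TransGen R m n ↔
      TransGen (restrictIci R C) m n ∨ ∃ u < C, TransGen R m u ∧ TransGen R u n := by
  refine ⟨fun h => ?_, ?_⟩
  · rcases TransGen.restrictIci_or_exists h hn with ⟨-, h⟩ | ⟨u, hu, hmu, w, -, huw, hwn⟩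
    · exact .inl h
    · refine .inr ⟨u, hu, ?_, .head' huw (ReflTransGen.mono (fun _ _ h => h.2.2) _ _ hwn)⟩
      exact (reflTransGen_iff_eq_or_transGen.1 hmu).resolve_left (by omega)
  · rintro (h | ⟨u, -, hmu, hun⟩)
    · exact TransGen.mono (fun _ _ h => h.2.2) _ _ h
    · exact hmu.trans hun

theorem transGen_iff_exists_restrictIci {u n : ℕ} (hu : u < C) (hn : C ≤ n) :
    TransGen R u n ↔
      ∃ v < C, ReflTransGen R u v ∧ ∃ w, C ≤ w ∧ R v w ∧ ReflTransGen (restrictIci R C) w n := by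
  refine ⟨fun h => ?_, ?_⟩
  · exact (TransGen.restrictIci_or_exists h hn).resolve_left (by omega)
  · rintro ⟨v, -, huv, w, -, hvw, hwn⟩
    exact TransGen.trans_right huv (.head' hvw (ReflTransGen.mono (fun _ _ h => h.2.2) _ _ hwn))

end restrictIci

namespace ConvPeriodic

variable {R : ℕ → ℕ → Prop} {t p C : ℕ}

theorem pumpable (h : ConvPeriodic R t p) (hC : t ≤ C) : Pumpable (restrictIci R C) t p :=
  ⟨fun a b ⟨ha, hb, hab⟩ => ⟨by omega, by omega, (h.shift a b (by omega) (by omega)).2 hab⟩,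
    fun a d hd ⟨ha, _, had⟩ => ⟨ha, by omega, (h.gap a d hd).2 had⟩⟩

theorem pumpable_swap (h : ConvPeriodic R t p) (hC : t ≤ C) :
    Pumpable (swap (restrictIci R C)) t p :=
  restrictIci_swap ▸ h.swap.pumpable hC

theorem ultimatelyPeriodic_exists_step_restrictIci (h : ConvPeriodic R t p) (ht : 0 < t)
    (hC : t ≤ C) (v : ℕ) :
    UltimatelyPeriodic fun n => ∃ w, C ≤ w ∧ R v w ∧ ReflTransGen (restrictIci R C) w n := by
  have hE := h.pumpable hC
  -- the targets `w < v + t` are finitely many; the other edges `R v w` can be lengthened by `p`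
  have hnear : UltimatelyPeriodic fun n =>
      ∃ w < v + t, C ≤ w ∧ R v w ∧ ReflTransGen (restrictIci R C) w n :=
    .exists_lt fun w _ => .const_and fun _ => .const_and fun _ =>
      hE.ultimatelyPeriodic_reflTransGen h.pos ht w
  have hfar : UltimatelyPeriodic fun n =>
      ∃ w, v + t ≤ w ∧ C ≤ w ∧ R v w ∧ ReflTransGen (restrictIci R C) w n := by
    refine .of_add_mem (c := 0) h.pos fun n _ ⟨w, hvw, hCw, hvw', hwn⟩ =>
      ⟨w + p, by omega, by omega, ?_, hE.reflTransGen_shift dvd_rfl hwn⟩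
    obtain ⟨d, rfl⟩ : ∃ d, w = v + d := ⟨w - v, by omega⟩
    exact (h.gap v d (by omega)).2 hvw'
  refine (hnear.or hfar).congr (.of_forall fun n => ⟨fun ⟨w, hCw, hvw, hwn⟩ => ?_, ?_⟩)
  · by_cases hw : w < v + t
    exacts [.inl ⟨w, hw, hCw, hvw, hwn⟩, .inr ⟨w, by omega, hCw, hvw, hwn⟩]
  · rintro (⟨w, -, hw⟩ | ⟨w, -, hw⟩) <;> exact ⟨w, hw⟩

theorem ultimatelyPeriodic_transGen (h : ConvPeriodic R t p) (u : ℕ) :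
    UltimatelyPeriodic (TransGen R u) := by
  have hB := (h.mono (t.le_add_right (u + 1))).ultimatelyPeriodic_exists_step_restrictIci
    (by omega) le_rfl
  have hT : UltimatelyPeriodic fun n => ∃ v < t + (u + 1), ReflTransGen R u v ∧
      ∃ w, t + (u + 1) ≤ w ∧ R v w ∧ ReflTransGen (restrictIci R (t + (u + 1))) w n :=
    .exists_lt fun v _ => .const_and fun _ => hB v
  exact hT.congr ((eventually_ge_atTop _).mono fun n hn =>
    transGen_iff_exists_restrictIci (by omega) hn)

theorem transGen_gapPeriodic (h : ConvPeriodic R t p) :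
    ∃ t' q, 0 < q ∧ GapPeriodic (TransGen R) t' q := by
  have hE := (h.mono (t.le_add_right 1)).pumpable le_rfl
  obtain ⟨q₁, hq₁, hhigh⟩ := hE.exists_transGen_gap_period h.pos (by omega)
  obtain ⟨q₂, hq₂, hlow⟩ :=
    exists_common_period (N := t + 1) fun u _ => h.ultimatelyPeriodic_transGen u
  obtain ⟨θ, hθ⟩ := eventually_atTop.1 (hhigh.and hlow)
  refine ⟨θ + t + 1, q₁ * q₂, by positivity, fun m d hd => ?_⟩
  have hhigh := (hθ d (by omega)).1 m q₂
  have hlow := (hθ (m + d) (by omega)).2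
  rcases lt_or_ge m (t + 1) with hm | hm
  · exact hlow m hm q₁
  rw [transGen_iff_restrictIci_or_exists (R := R) hm (n := m + d + q₁ * q₂) (by omega),
    transGen_iff_restrictIci_or_exists (R := R) hm (n := m + d) (by omega), mul_comm q₁]
  exact or_congr hhigh (exists_congr fun u => and_congr_right fun hu =>
    and_congr_right fun _ => by rw [mul_comm]; exact hlow u hu q₁)

theorem transGen_shiftPeriodic (h : ConvPeriodic R t p) :
    ∃ t' q, 0 < q ∧ ShiftPeriodic (TransGen R) t' q := by
  have h' := h.mono (t.le_add_right 1)
  obtain ⟨V₁, hV₁⟩ := (h'.pumpable le_rfl).exists_transGen_stable h.pos (by omega)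
  obtain ⟨V₂, hV₂⟩ := (h'.pumpable_swap le_rfl).exists_transGen_stable h.pos (by omega)
  obtain ⟨q₁, hq₁, hup⟩ :=
    exists_common_period (N := t + 1) fun u _ => h.ultimatelyPeriodic_transGen u
  obtain ⟨q₂, hq₂, hdown⟩ :=
    exists_common_period (N := t + 1) fun u _ => h.swap.ultimatelyPeriodic_transGen u
  obtain ⟨θ, hθ⟩ := eventually_atTop.1 (hup.and hdown)
  refine ⟨θ + V₁ + V₂ + t + 1, q₁ * q₂ * p, Nat.mul_pos (Nat.mul_pos hq₁ hq₂) h.pos,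
    fun m n hm hn => ?_⟩
  rw [transGen_iff_restrictIci_or_exists (R := R) (C := t + 1) (m := m + _) (by omega) (by omega),
    transGen_iff_restrictIci_or_exists (R := R) (C := t + 1) (m := m) (by omega) (by omega)]
  refine or_congr ?_ (exists_congr fun u => and_congr_right fun hu => and_congr ?_ ?_)
  · rcases le_total m n with hmn | hmn
    · obtain ⟨d, rfl⟩ := Nat.exists_eq_add_of_le hmn
      rw [add_right_comm]
      exact hV₁ m (by omega) (q₁ * q₂) d
    · obtain ⟨d, rfl⟩ := Nat.exists_eq_add_of_le hmn
      rw [add_right_comm, ← transGen_swap]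
      exact (hV₂ n (by omega) (q₁ * q₂) d).trans transGen_swap
  · have := (hθ m (by omega)).2 u hu (q₁ * p)
    rw [mul_right_comm] at this
    exact transGen_swap.symm.trans (this.trans transGen_swap)
  · have := (hθ n (by omega)).1 u hu (q₂ * p)
    rwa [show q₁ * q₂ * p = q₂ * p * q₁ by ring]

theorem transGen (h : ConvPeriodic R t p) : ∃ t' p', ConvPeriodic (TransGen R) t' p' := by
  obtain ⟨t₁, q₁, hq₁, hshift⟩ := h.transGen_shiftPeriodic
  obtain ⟨t₂, q₂, hq₂, hgap⟩ := h.transGen_gapPeriodic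
  obtain ⟨t₃, q₃, hq₃, hgap'⟩ := h.swap.transGen_gapPeriodic
  have hswap : TransGen (swap R) = swap (TransGen R) := funext₂ fun _ _ => propext transGen_swap
  rw [hswap] at hgap'
  refine ⟨t₁ + t₂ + t₃, q₁ * q₂ * q₃, ⟨by positivity, ?_, ?_, ?_⟩⟩
  · rw [show q₁ * q₂ * q₃ = q₂ * q₃ * q₁ by ring]
    exact (hshift.mul _).mono (by omega)
  · rw [show q₁ * q₂ * q₃ = q₁ * q₃ * q₂ by ring]
    exact (hgap.mul _).mono (by omega)
  · exact (hgap'.mul _).mono (by omega)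

end ConvPeriodic

theorem stmt3 (R : ℕ → ℕ → Prop) (hR : RegularRel R) :
    RegularRel (Relation.TransGen R) := by
  obtain ⟨t, p, h⟩ := convPeriodic_of_isRegular hR
  obtain ⟨t', p', h'⟩ := h.transGen
  exact h'.isRegular
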